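/- arXiv:1309.5713 — 4 statements merged into one kernel-verified Lean document; each statement's English description precedes it below -/
import Mathlib

section
/- Let τ be a triangle function on Δ⁺ and Σ a ring of sets. A set function γ: Σ → Δ⁺ with γ_∅ = ε₀ satisfies γ_{E∪F} = τ(γ_E, γ_F) for all disjoint E, F ∈ Σ if and only if τ(γ_{E∪F}, γ_{E∩F}) = τ(γ_E, γ_F) for all E, F ∈ Σ. -/
open MeasureTheory Filter Set Topology

noncomputable section

/-- The distribution function of the Dirac measure at 0. -/
def eps0 : ℝ → ℝ := fun x => if 0 < x then 1 else 0

/-- εₐ : the distribution function of the Dirac measure at `a`. -/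
def epsAt (a : ℝ) : ℝ → ℝ := fun x => if a < x then 1 else 0

/-- Distance distribution function: non-decreasing, left-continuous,
vanishing on `(-∞,0]`, with values in `[0,1]` and `sup F = 1`. -/
def IsDDF (F : ℝ → ℝ) : Prop :=
  Monotone F ∧ (∀ x : ℝ, ContinuousWithinAt F (Set.Iio x) x) ∧
  (∀ x ≤ (0:ℝ), F x = 0) ∧ (∀ x, 0 ≤ F x ∧ F x ≤ 1) ∧
  Tendsto F atTop (nhds 1)

/-- Triangle function on Δ⁺: maps Δ⁺ × Δ⁺ into Δ⁺, symmetric, associative,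
non-decreasing in each variable, with ε₀ as identity. -/
def IsTriangleFn (τ : (ℝ → ℝ) → (ℝ → ℝ) → (ℝ → ℝ)) : Prop :=
  (∀ G H, IsDDF G → IsDDF H → IsDDF (τ G H)) ∧
  (∀ G H, τ G H = τ H G) ∧
  (∀ F G H, τ (τ F G) H = τ F (τ G H)) ∧
  (∀ F G H : ℝ → ℝ, F ≤ G → τ F H ≤ τ G H) ∧
  (∀ G, IsDDF G → τ G eps0 = G)

/-- Scalar multiplication `c ⊙ G` on Δ⁺. -/
def smulDDF (c : ℝ) (G : ℝ → ℝ) : ℝ → ℝ := fun x => if c = 0 then eps0 x else G (x / c)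

/-- Distributive triangle function: `c ⊙ τ(G,H) = τ(c ⊙ G, c ⊙ H)`. -/
def IsDistributive (τ : (ℝ → ℝ) → (ℝ → ℝ) → (ℝ → ℝ)) : Prop :=
  ∀ c : ℝ, 0 ≤ c → ∀ G H, smulDDF c (τ G H) = τ (smulDDF c G) (smulDDF c H)

/-- The Sibley (modified Lévy) metric on Δ⁺. -/
def dS (G H : ℝ → ℝ) : ℝ :=
  sInf {h : ℝ | 0 < h ∧ ∀ x ∈ Set.Icc (0:ℝ) (1/h),
    G (x - h) - h ≤ H x ∧ H x ≤ G (x + h) + h}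

/-- Iterated τ-sum `⊕_{i} G i` over `Fin n` (empty sum is `ε₀`). -/
def oplus (τ : (ℝ → ℝ) → (ℝ → ℝ) → (ℝ → ℝ)) : ∀ {n : ℕ}, (Fin n → (ℝ → ℝ)) → (ℝ → ℝ)
  | 0, _ => eps0
  | _ + 1, G => τ (G 0) (oplus τ (fun i => G i.succ))

/-- Partial sums `⊕_{k=0}^{n} G k` of a sequence. -/
def oplusPartial (τ : (ℝ → ℝ) → (ℝ → ℝ) → (ℝ → ℝ)) (G : ℕ → (ℝ → ℝ)) : ℕ → (ℝ → ℝ)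
  | 0 => G 0
  | n + 1 => τ (oplusPartial τ G n) (G (n + 1))

/-- A simple non-negative function: finite values on pairwise disjoint measurable sets. -/
structure SimpleFn (S : Set (Set Ω)) where
  n : ℕ
  c : Fin n → ℝ
  A : Fin n → Set Ω
  hc : ∀ i, 0 ≤ c i
  hA : ∀ i, A i ∈ S
  hdisj : Pairwise (Function.onFun Disjoint A)

def SimpleFn.toFun {Ω : Type*} {S : Set (Set Ω)} (f : SimpleFn S) : Ω → ℝ :=
  fun t => ∑ i, (f.A i).indicator (fun _ => f.c i) t

/-- The γ-integral of a simple function on `E`: `⊕ᵢ xᵢ ⊙ γ_{E∩Eᵢ}`. -/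
def SimpleFn.integral {Ω : Type*} {S : Set (Set Ω)} (f : SimpleFn S)
    (τ : (ℝ → ℝ) → (ℝ → ℝ) → (ℝ → ℝ)) (γ : Set Ω → (ℝ → ℝ)) (E : Set Ω) : ℝ → ℝ :=
  oplus τ (fun i => smulDDF (f.c i) (γ (E ∩ f.A i)))

/-- Left-continuous regularization `𝔊(x) = sup_{x' < x} G(x')`. -/
def lcReg (G : ℝ → ℝ) : ℝ → ℝ := fun x => sSup (G '' Set.Iio x)

/-- `𝔣 ∈ 𝒮_{f,E}` : simple functions below `f` on `E`. -/
def SimpleFn.belowOn {Ω : Type*} {S : Set (Set Ω)} (𝔣 : SimpleFn S)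
    (f : Ω → ENNReal) (E : Set Ω) : Prop :=
  ∀ t ∈ E, ENNReal.ofReal (𝔣.toFun t) ≤ f t

/-- `f` is γ-integrable on `E`: the integrals of simple functions below `f`
are bounded from below by some distance distribution function. -/
def Integrable' {Ω : Type*} {S : Set (Set Ω)}
    (τ : (ℝ → ℝ) → (ℝ → ℝ) → (ℝ → ℝ)) (γ : Set Ω → (ℝ → ℝ))
    (f : Ω → ENNReal) (E : Set Ω) : Prop :=
  ∃ H : ℝ → ℝ, IsDDF H ∧ ∀ 𝔣 : SimpleFn S, 𝔣.belowOn f E → H ≤ 𝔣.integral τ γ E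

/-- The γ-integral `∫_E f dγ` : the infimum in (Δ⁺, ≤) of integrals of simple
functions below `f` on `E` (left-continuous regularization of the pointwise infimum). -/
def probIntegral {Ω : Type*} (S : Set (Set Ω))
    (τ : (ℝ → ℝ) → (ℝ → ℝ) → (ℝ → ℝ)) (γ : Set Ω → (ℝ → ℝ))
    (f : Ω → ENNReal) (E : Set Ω) : ℝ → ℝ :=
  lcReg (fun x => sInf {y | ∃ 𝔣 : SimpleFn S, 𝔣.belowOn f E ∧ 𝔣.integral τ γ E x = y})

open Classical in
/-- The Lebesgue–Stieltjes measure of a monotone function (junk value otherwise). -/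
def lsMeasure (H : ℝ → ℝ) : Measure ℝ :=
  if h : Monotone H then h.stieltjesFunction.measure else 0

/-- Convolution `(G * H)(x) = ∫₀ˣ G(x−t) dH(t)` (Lebesgue–Stieltjes). -/
def conv (G H : ℝ → ℝ) : ℝ → ℝ := fun x =>
  if 0 < x then ∫ t in Set.Icc (0:ℝ) x, G (x - t) ∂(lsMeasure H) else 0

/-- `τ_{L,M}(G,H)(x) = sup_{L(u,v)=x} min(G(u),H(v))`. -/
def tauLM (L : ℝ → ℝ → ℝ) (G H : ℝ → ℝ) : ℝ → ℝ := fun x =>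
  sSup {t | ∃ u v : ℝ, 0 ≤ u ∧ 0 ≤ v ∧ L u v = x ∧ t = min (G u) (H v)}

/-- Pseudo-addition on `[0,∞)`: commutative, associative, jointly strictly
increasing, continuous, with neutral element 0. -/
def IsPseudoAddition (L : ℝ → ℝ → ℝ) : Prop :=
  (∀ u v, 0 ≤ u → 0 ≤ v → L u v = L v u) ∧
  (∀ u v w, 0 ≤ u → 0 ≤ v → 0 ≤ w → L (L u v) w = L u (L v w)) ∧
  (∀ u₁ u₂ v₁ v₂, 0 ≤ u₁ → 0 ≤ v₁ → u₁ < u₂ → v₁ < v₂ → L u₁ v₁ < L u₂ v₂) ∧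
  Continuous (fun p : ℝ × ℝ => L p.1 p.2) ∧
  (∀ u, 0 ≤ u → L 0 u = u ∧ L u 0 = u)

/-- γ is a τ-decomposable measure on the ring S. -/
def IsDecomposable {Ω : Type*} (S : Set (Set Ω))
    (τ : (ℝ → ℝ) → (ℝ → ℝ) → (ℝ → ℝ)) (γ : Set Ω → (ℝ → ℝ)) : Prop :=
  γ ∅ = eps0 ∧ ∀ E F : Set Ω, E ∈ S → F ∈ S → Disjoint E F → γ (E ∪ F) = τ (γ E) (γ F)

/-- γ is continuous from below: `γ_{E_n} → γ_E` weakly (in the Sibley metric)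
whenever `E_n ↗ E`. -/
def ContinuousFromBelow {Ω : Type*} (S : Set (Set Ω)) (γ : Set Ω → (ℝ → ℝ)) : Prop :=
  ∀ E : ℕ → Set Ω, (∀ n, E n ∈ S) → Monotone E → (⋃ n, E n) ∈ S →
    Tendsto (fun n => dS (γ (E n)) (γ (⋃ n, E n))) atTop (nhds 0)

/-- Sequential continuity of a triangle function w.r.t. the Sibley metric. -/
def IsContinuousTriangle (τ : (ℝ → ℝ) → (ℝ → ℝ) → (ℝ → ℝ)) : Prop :=
  ∀ (G H : ℝ → ℝ) (Gn Hn : ℕ → (ℝ → ℝ)), IsDDF G → IsDDF H → (∀ n, IsDDF (Gn n)) →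
    (∀ n, IsDDF (Hn n)) →
    Tendsto (fun n => dS (Gn n) G) atTop (nhds 0) →
    Tendsto (fun n => dS (Hn n) H) atTop (nhds 0) →
    Tendsto (fun n => dS (τ (Gn n) (Hn n)) (τ G H)) atTop (nhds 0)

/-! For a ring of sets, `E ∪ F = E ∪ (F \ E)` and `F = (F \ E) ∪ (E ∩ F)` are disjoint unions, so
associativity turns additivity into the modular law. Conversely, for disjoint `E, F` the modular
law reads `γ (E ∪ F) ⊕ γ ∅ = γ E ⊕ γ F`, and `γ ∅` is the identity. -/

section SetFunction

variable {Ω α : Type*} (S : Set (Set Ω)) (op : α → α → α) (γ : Set Ω → α)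

def IsOpAdditive : Prop :=
  ∀ E F : Set Ω, E ∈ S → F ∈ S → Disjoint E F → γ (E ∪ F) = op (γ E) (γ F)

def IsOpModular : Prop :=
  ∀ E F : Set Ω, E ∈ S → F ∈ S → op (γ (E ∪ F)) (γ (E ∩ F)) = op (γ E) (γ F)

variable {S op γ}

theorem MeasureTheory.IsSetRing.isOpModular_of_isOpAdditive (hS : IsSetRing S)
    (hassoc : ∀ a b c, op (op a b) c = op a (op b c)) (hadd : IsOpAdditive S op γ) :
    IsOpModular S op γ := by
  intro E F hE hF
  have hFE : F \ E ∈ S := hS.sdiff_mem hF hE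
  calc op (γ (E ∪ F)) (γ (E ∩ F))
      = op (op (γ E) (γ (F \ E))) (γ (E ∩ F)) := by
        rw [← union_sdiff_self, hadd E (F \ E) hE hFE disjoint_sdiff_right]
    _ = op (γ E) (op (γ (F \ E)) (γ (E ∩ F))) := hassoc ..
    _ = op (γ E) (γ F) := by
        rw [← hadd (F \ E) (E ∩ F) hFE (hS.inter_mem hE hF)
          (disjoint_sdiff_left.mono_right inter_subset_left), inter_comm, sdiff_union_inter]

theorem MeasureTheory.IsSetRing.isOpAdditive_of_isOpModular (hS : IsSetRing S)
    (hid : ∀ E ∈ S, op (γ E) (γ ∅) = γ E) (hmod : IsOpModular S op γ) :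
    IsOpAdditive S op γ := by
  intro E F hE hF hEF
  rw [← hmod E F hE hF, disjoint_iff_inter_eq_empty.mp hEF, hid _ (hS.union_mem hE hF)]

end SetFunction

/-- γ with γ_∅ = ε₀ is a τ-decomposable measure iff
τ(γ_{E∪F}, γ_{E∩F}) = τ(γ_E, γ_F) for all E, F in the ring. -/
theorem stmt4 {Ω : Type*} (S : Set (Set Ω)) (hS : MeasureTheory.IsSetRing S)
    (τ : (ℝ → ℝ) → (ℝ → ℝ) → (ℝ → ℝ)) (hτ : IsTriangleFn τ)
    (γ : Set Ω → (ℝ → ℝ)) (hmem : ∀ E ∈ S, IsDDF (γ E)) (h0 : γ ∅ = eps0) :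
    (∀ E F : Set Ω, E ∈ S → F ∈ S → Disjoint E F → γ (E ∪ F) = τ (γ E) (γ F)) ↔
    (∀ E F : Set Ω, E ∈ S → F ∈ S → τ (γ (E ∪ F)) (γ (E ∩ F)) = τ (γ E) (γ F)) := by
  obtain ⟨-, -, hassoc, -, hid⟩ := hτ
  have hid_empty : ∀ E ∈ S, τ (γ E) (γ ∅) = γ E := fun E hE => h0 ▸ hid _ (hmem E hE)
  exact ⟨hS.isOpModular_of_isOpAdditive hassoc, hS.isOpAdditive_of_isOpModular hid_empty⟩

end
end

section
/- Let τ be a triangle function and γ a σ-additive τ-decomposable measure on a σ-ring Σ (limits taken in the Sibley metric d_S on Δ⁺). If E_n ↗ E (i.e., E_n ⊆ E_{n+1} and ∪E_n = E), then γ_{E_n} converges weakly to γ_E. -/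
/-!
Disjointify the increasing sequence: `E n` is the disjoint union of the pieces
`E 0, E 1 \ E 0, …, E n \ E (n - 1)`, so by τ-decomposability `γ (E n)` is the `n`-th partial
τ-sum of γ over these pieces, and σ-additivity applied to the pieces gives the limit `γ (⋃ n, E n)`.
-/

open MeasureTheory Filter Set Topology

noncomputable section

namespace IsDecomposable

variable {Ω : Type*} {S : Set (Set Ω)} {τ : (ℝ → ℝ) → (ℝ → ℝ) → (ℝ → ℝ)}
  {γ : Set Ω → (ℝ → ℝ)}

theorem oplusPartial_disjointed (hγ : IsDecomposable S τ γ)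
    (hdiff : ∀ A B : Set Ω, A ∈ S → B ∈ S → A \ B ∈ S)
    {E : ℕ → Set Ω} (hE : ∀ n, E n ∈ S) (hmono : Monotone E) (n : ℕ) :
    oplusPartial τ (fun k => γ (disjointed E k)) n = γ (E n) := by
  induction n with
  | zero => simp [oplusPartial]
  | succ k ih =>
    calc oplusPartial τ (fun k => γ (disjointed E k)) (k + 1)
        = τ (γ (E k)) (γ (E (k + 1) \ E k)) := by
          rw [oplusPartial, ih, ← Order.succ_eq_add_one, hmono.disjointed_succ (not_isMax k)]
      _ = γ (E k ∪ E (k + 1) \ E k) :=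
          (hγ.2 _ _ (hE k) (hdiff _ _ (hE (k + 1)) (hE k)) disjoint_sdiff_right).symm
      _ = γ (E (k + 1)) := by rw [union_sdiff_cancel (hmono k.le_succ)]

end IsDecomposable

theorem stmt7_general {Ω : Type*} (S : Set (Set Ω))
    (hdiff : ∀ A B : Set Ω, A ∈ S → B ∈ S → A \ B ∈ S)
    (τ : (ℝ → ℝ) → (ℝ → ℝ) → (ℝ → ℝ))
    (γ : Set Ω → (ℝ → ℝ))
    (hγ : IsDecomposable S τ γ)
    (hσ : ∀ E : ℕ → Set Ω, (∀ n, E n ∈ S) → Pairwise (Function.onFun Disjoint E) →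
      Tendsto (fun n => dS (oplusPartial τ (fun k => γ (E k)) n) (γ (⋃ k, E k)))
        atTop (nhds 0))
    (E : ℕ → Set Ω) (hE : ∀ n, E n ∈ S) (hmono : Monotone E) :
    Tendsto (fun n => dS (γ (E n)) (γ (⋃ n, E n))) atTop (nhds 0) := by
  have hpieces : ∀ n, disjointed E n ∈ S := fun n =>
    disjointedRec (fun t i ht => hdiff t (E i) ht (hE i)) (hE n)
  have hlim := hσ (disjointed E) hpieces (disjoint_disjointed E)
  simpa only [iUnion_disjointed, hγ.oplusPartial_disjointed hdiff hE hmono] using hlim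

/-- a σ-additive τ-decomposable measure on a σ-ring is continuous
from below: if E_n ↗ E then γ_{E_n} → γ_E weakly (in the Sibley metric d_S). -/
theorem stmt7 {Ω : Type*} (S : Set (Set Ω))
    (hempty : (∅ : Set Ω) ∈ S)
    (hdiff : ∀ A B : Set Ω, A ∈ S → B ∈ S → A \ B ∈ S)
    (hiUnion : ∀ f : ℕ → Set Ω, (∀ n, f n ∈ S) → (⋃ n, f n) ∈ S)
    (τ : (ℝ → ℝ) → (ℝ → ℝ) → (ℝ → ℝ)) (hτ : IsTriangleFn τ)
    (γ : Set Ω → (ℝ → ℝ)) (hmem : ∀ E ∈ S, IsDDF (γ E))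
    (hγ : IsDecomposable S τ γ)
    (hσ : ∀ E : ℕ → Set Ω, (∀ n, E n ∈ S) → Pairwise (Function.onFun Disjoint E) →
      Tendsto (fun n => dS (oplusPartial τ (fun k => γ (E k)) n) (γ (⋃ k, E k)))
        atTop (nhds 0))
    (E : ℕ → Set Ω) (hE : ∀ n, E n ∈ S) (hmono : Monotone E) :
    Tendsto (fun n => dS (γ (E n)) (γ (⋃ n, E n))) atTop (nhds 0) :=
  stmt7_general S hdiff τ γ hγ hσ E hE hmono

end
end

section
/- If μ: Σ → [0,∞) satisfies μ(E∪F) = max(μ(E), μ(F)) for disjoint E, F and μ(∅)=0, then γ_E := ε_{μ(E)} is a Π_⊤-decomposable measure for every left-continuous t-norm ⊤, where Π_⊤(G,H)(t) = ⊤(G(t), H(t)). -/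
open MeasureTheory Filter Set Topology

noncomputable section

/-! `ε_a` only takes the values `0` and `1`, on which every t-norm agrees with `min`;
and `ε_{max(a,b)} = min(ε_a, ε_b)`, so max-decomposability of `μ` becomes `Π_⊤`-decomposability. -/

lemma epsAt_eq_zero_or_one (a t : ℝ) : epsAt a t = 0 ∨ epsAt a t = 1 := by
  unfold epsAt
  split_ifs <;> simp

lemma epsAt_max (a b : ℝ) : epsAt (max a b) = fun t => min (epsAt a t) (epsAt b t) := by
  funext t
  simp only [epsAt, max_lt_iff]
  split_ifs <;> simp_all

lemma tnorm_eq_min_of_eq_zero_or_one (T : ℝ → ℝ → ℝ)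
    (hcomm : ∀ x y, x ∈ Set.Icc (0:ℝ) 1 → y ∈ Set.Icc (0:ℝ) 1 → T x y = T y x)
    (hmono : ∀ x₁ x₂ y, x₁ ∈ Set.Icc (0:ℝ) 1 → x₂ ∈ Set.Icc (0:ℝ) 1 → y ∈ Set.Icc (0:ℝ) 1 →
      x₁ ≤ x₂ → T x₁ y ≤ T x₂ y)
    (hmem : ∀ x y, x ∈ Set.Icc (0:ℝ) 1 → y ∈ Set.Icc (0:ℝ) 1 → T x y ∈ Set.Icc (0:ℝ) 1)
    (hone : ∀ x, x ∈ Set.Icc (0:ℝ) 1 → T 1 x = x)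
    {x y : ℝ} (hx : x = 0 ∨ x = 1) (hy : y = 0 ∨ y = 1) : T x y = min x y := by
  have h0 : (0:ℝ) ∈ Set.Icc (0:ℝ) 1 := ⟨le_rfl, zero_le_one⟩
  have h1 : (1:ℝ) ∈ Set.Icc (0:ℝ) 1 := ⟨zero_le_one, le_rfl⟩
  have hT10 : T 1 0 = 0 := hone 0 h0
  have hT00 : T 0 0 = 0 :=
    le_antisymm ((hmono 0 1 0 h0 h1 h0 zero_le_one).trans_eq hT10) (hmem 0 0 h0 h0).1
  rcases hx with rfl | rfl <;> rcases hy with rfl | rfl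
  · simp [hT00]
  · simp [hcomm 0 1 h0 h1, hT10]
  · simp [hT10]
  · simp [hone 1 h1]

theorem stmt11_general {Ω : Type*} (S : Set (Set Ω))
    (T : ℝ → ℝ → ℝ)
    (hcomm : ∀ x y, x ∈ Set.Icc (0:ℝ) 1 → y ∈ Set.Icc (0:ℝ) 1 → T x y = T y x)
    (hmono : ∀ x₁ x₂ y, x₁ ∈ Set.Icc (0:ℝ) 1 → x₂ ∈ Set.Icc (0:ℝ) 1 → y ∈ Set.Icc (0:ℝ) 1 →
      x₁ ≤ x₂ → T x₁ y ≤ T x₂ y)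
    (hmem : ∀ x y, x ∈ Set.Icc (0:ℝ) 1 → y ∈ Set.Icc (0:ℝ) 1 → T x y ∈ Set.Icc (0:ℝ) 1)
    (hone : ∀ x, x ∈ Set.Icc (0:ℝ) 1 → T 1 x = x)
    (μ : Set Ω → ℝ) (hμ0 : μ ∅ = 0)
    (hmax : ∀ E F : Set Ω, E ∈ S → F ∈ S → Disjoint E F → μ (E ∪ F) = max (μ E) (μ F)) :
    IsDecomposable S (fun G H => fun t => T (G t) (H t)) (fun E => epsAt (μ E)) := by
  refine ⟨by simp only [hμ0]; rfl, fun E F hE hF hEF => ?_⟩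
  funext t
  simp only [hmax E F hE hF hEF, epsAt_max]
  exact (tnorm_eq_min_of_eq_zero_or_one T hcomm hmono hmem hone
    (epsAt_eq_zero_or_one _ t) (epsAt_eq_zero_or_one _ t)).symm

/-- if μ is max-decomposable then γ_E := ε_{μ(E)} is
Π_⊤-decomposable for every left-continuous t-norm ⊤. -/
theorem stmt11 {Ω : Type*} (S : Set (Set Ω)) (hS : MeasureTheory.IsSetRing S)
    (T : ℝ → ℝ → ℝ)
    (hcomm : ∀ x y, x ∈ Set.Icc (0:ℝ) 1 → y ∈ Set.Icc (0:ℝ) 1 → T x y = T y x)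
    (hassoc : ∀ x y z, x ∈ Set.Icc (0:ℝ) 1 → y ∈ Set.Icc (0:ℝ) 1 → z ∈ Set.Icc (0:ℝ) 1 →
      T (T x y) z = T x (T y z))
    (hmono : ∀ x₁ x₂ y, x₁ ∈ Set.Icc (0:ℝ) 1 → x₂ ∈ Set.Icc (0:ℝ) 1 → y ∈ Set.Icc (0:ℝ) 1 →
      x₁ ≤ x₂ → T x₁ y ≤ T x₂ y)
    (hmem : ∀ x y, x ∈ Set.Icc (0:ℝ) 1 → y ∈ Set.Icc (0:ℝ) 1 → T x y ∈ Set.Icc (0:ℝ) 1)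
    (hone : ∀ x, x ∈ Set.Icc (0:ℝ) 1 → T 1 x = x)
    (hlc : ∀ y x : ℝ, ContinuousWithinAt (fun u => T u y) (Set.Iio x) x)
    (μ : Set Ω → ℝ) (hμ0 : μ ∅ = 0) (hμnn : ∀ E ∈ S, 0 ≤ μ E)
    (hmax : ∀ E F : Set Ω, E ∈ S → F ∈ S → Disjoint E F → μ (E ∪ F) = max (μ E) (μ F)) :
    IsDecomposable S (fun G H => fun t => T (G t) (H t)) (fun E => epsAt (μ E)) :=
  stmt11_general S T hcomm hmono hmem hone μ hμ0 hmax

end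
end

section
/- Let τ be a distributive triangle function and γ a τ-decomposable measure on a ring Σ. The integral of a simple function is well-defined: if f = Σᵢ αᵢ χ_{Eᵢ} = Σⱼ βⱼ χ_{Fⱼ} are two representations with pairwise disjoint measurable sets, then ⊕ᵢ αᵢ ⊙ γ_{E∩Eᵢ} = ⊕ⱼ βⱼ ⊙ γ_{E∩Fⱼ} for any E ∈ Σ. -/
open MeasureTheory Filter Set Topology

noncomputable section

/-! On the cells `E ∩ Eᵢ ∩ Fⱼ` of the common refinement of the two representations the
coefficients `αᵢ` and `βⱼ` agree whenever the cell is non-empty, while empty cells contribute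
`c ⊙ γ_∅ = ε₀` whatever `c` is. Each `αᵢ ⊙ γ_{E∩Eᵢ}` is the `τ`-sum of its restrictions to the
cells: for `αᵢ = 0` both sides are `ε₀`, and otherwise `Eᵢ` is covered by the `Fⱼ` (as
`g = f = αᵢ ≠ 0` on `Eᵢ`), so decomposability and distributivity apply. The two resulting
double `τ`-sums agree after exchanging the order of summation. -/

lemma isDDF_eps0 : IsDDF eps0 := by
  refine ⟨fun x y hxy => ?_, fun x => ?_, fun x hx => by simp [eps0, not_lt.2 hx],
    fun x => by unfold eps0; split_ifs <;> norm_num, ?_⟩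
  · unfold eps0
    split_ifs with hx hy <;> first | exact absurd (hx.trans_le hxy) hy | norm_num
  · refine tendsto_const_nhds.congr' ?_
    rcases le_or_gt x 0 with hx | hx
    · filter_upwards [self_mem_nhdsWithin] with y (hy : y < x)
      simp [eps0, not_lt.2 hx, not_lt.2 (hy.le.trans hx)]
    · filter_upwards [mem_nhdsWithin_of_mem_nhds (Ioi_mem_nhds hx)] with y (hy : 0 < y)
      simp [eps0, hx, hy]
  · refine tendsto_const_nhds.congr' ?_
    filter_upwards [eventually_gt_atTop 0] with y hy
    simp [eps0, hy]

lemma smulDDF_zero_left (G : ℝ → ℝ) : smulDDF 0 G = eps0 := by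
  funext x; simp [smulDDF]

lemma smulDDF_eps0 {c : ℝ} (hc : 0 ≤ c) : smulDDF c eps0 = eps0 := by
  rcases hc.eq_or_lt with rfl | hc
  · exact smulDDF_zero_left eps0
  · funext x
    simp [smulDDF, eps0, hc.ne', hc]

section Oplus

variable {τ : (ℝ → ℝ) → (ℝ → ℝ) → (ℝ → ℝ)}

lemma IsTriangleFn.tau_eps0_eps0 (hτ : IsTriangleFn τ) : τ eps0 eps0 = eps0 :=
  hτ.2.2.2.2 eps0 isDDF_eps0

lemma oplus_succ {n : ℕ} (G : Fin (n + 1) → ℝ → ℝ) :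
    oplus τ G = τ (G 0) (oplus τ fun i => G i.succ) := rfl

lemma oplus_const_eps0 (he : τ eps0 eps0 = eps0) :
    ∀ n : ℕ, oplus τ (fun _ : Fin n => eps0) = eps0
  | 0 => rfl
  | n + 1 => by rw [oplus_succ, oplus_const_eps0 he n, he]

lemma smulDDF_oplus (hd : IsDistributive τ) {c : ℝ} (hc : 0 ≤ c) :
    ∀ {n : ℕ} (G : Fin n → ℝ → ℝ),
      smulDDF c (oplus τ G) = oplus τ fun i => smulDDF c (G i)
  | 0, _ => smulDDF_eps0 hc
  | _ + 1, G => by rw [oplus_succ, hd c hc, smulDDF_oplus hd hc]; rfl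

variable [Std.Commutative τ] [Std.Associative τ]

lemma oplus_tau_distrib (he : τ eps0 eps0 = eps0) :
    ∀ {n : ℕ} (G H : Fin n → ℝ → ℝ),
      oplus τ (fun i => τ (G i) (H i)) = τ (oplus τ G) (oplus τ H)
  | 0, _, _ => he.symm
  | _ + 1, G, H => by
    simp only [oplus_succ, oplus_tau_distrib he]
    ac_rfl

lemma oplus_comm (he : τ eps0 eps0 = eps0) :
    ∀ {m n : ℕ} (G : Fin m → Fin n → ℝ → ℝ),
      (oplus τ fun i => oplus τ fun j => G i j) = oplus τ fun j => oplus τ fun i => G i j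
  | 0, n, _ => (oplus_const_eps0 he n).symm
  | _ + 1, _, G => by
    rw [oplus_succ, oplus_comm he, ← oplus_tau_distrib he]
    rfl

end Oplus

section Decomposable

variable {Ω : Type*} {S : Set (Set Ω)} {τ : (ℝ → ℝ) → (ℝ → ℝ) → (ℝ → ℝ)}
  {γ : Set Ω → ℝ → ℝ}

lemma IsDecomposable.apply_iUnion (hS : IsSetRing S) (hγ : IsDecomposable S τ γ) :
    ∀ {n : ℕ} (D : Fin n → Set Ω), (∀ i, D i ∈ S) → Pairwise (Function.onFun Disjoint D) →
      γ (⋃ i, D i) = oplus τ fun i => γ (D i)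
  | 0, D, _, _ => by rw [iUnion_of_empty]; exact hγ.1
  | n + 1, D, hD, hdisj => by
    have hunion : (⋃ i, D i) = D 0 ∪ ⋃ i : Fin n, D i.succ := by
      ext t; simp [Fin.exists_fin_succ]
    have htail : (⋃ i : Fin n, D i.succ) ∈ S := by
      simpa using hS.biUnion_mem Finset.univ fun i _ => hD i.succ
    rw [hunion, hγ.2 _ _ (hD 0) htail
      (disjoint_iUnion_right.2 fun i => hdisj (Fin.succ_ne_zero i).symm),
      hγ.apply_iUnion hS (fun i => D i.succ) (fun i => hD _)
        (fun i j hij => hdisj (Fin.succ_injective n |>.ne hij))]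
    rfl

lemma IsDecomposable.smulDDF_apply_eq_oplus_inter (hS : IsSetRing S) (he : τ eps0 eps0 = eps0)
    (hd : IsDistributive τ) (hγ : IsDecomposable S τ γ) {c : ℝ} (hc : 0 ≤ c) {F : Set Ω}
    (hF : F ∈ S) {n : ℕ} {B : Fin n → Set Ω} (hB : ∀ j, B j ∈ S)
    (hBdisj : Pairwise (Function.onFun Disjoint B)) (hcover : c ≠ 0 → F ⊆ ⋃ j, B j) :
    smulDDF c (γ F) = oplus τ fun j => smulDDF c (γ (F ∩ B j)) := by
  rcases eq_or_ne c 0 with rfl | hc0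
  · simp only [smulDDF_zero_left]
    exact (oplus_const_eps0 he n).symm
  · have hF_eq : F = ⋃ j, F ∩ B j := by rw [← inter_iUnion, inter_eq_left.2 (hcover hc0)]
    rw [← smulDDF_oplus hd hc, ← hγ.apply_iUnion hS _ (fun j => hS.inter_mem hF (hB j))
        (fun i j hij => (hBdisj hij).mono inter_subset_right inter_subset_right), ← hF_eq]

end Decomposable

namespace SimpleFn

variable {Ω : Type*} {S : Set (Set Ω)}

lemma toFun_of_mem (f : SimpleFn S) {t : Ω} {i : Fin f.n} (ht : t ∈ f.A i) :
    f.toFun t = f.c i := by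
  unfold toFun
  rw [Finset.sum_eq_single_of_mem i (Finset.mem_univ i)]
  · exact indicator_of_mem ht _
  · exact fun k _ hk => indicator_of_notMem (disjoint_left.1 (f.hdisj hk).symm ht) _

lemma mem_iUnion_of_toFun_ne_zero (f : SimpleFn S) {t : Ω} (ht : f.toFun t ≠ 0) :
    t ∈ ⋃ i, f.A i := by
  obtain ⟨i, -, hi⟩ := Finset.exists_ne_zero_of_sum_ne_zero ht
  exact mem_iUnion.2 ⟨i, by_contra fun h => hi (indicator_of_notMem h _)⟩

variable {f g : SimpleFn S}

lemma c_eq_of_mem (hfg : f.toFun = g.toFun) {t : Ω} {i : Fin f.n} {j : Fin g.n}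
    (hi : t ∈ f.A i) (hj : t ∈ g.A j) : f.c i = g.c j := by
  rw [← f.toFun_of_mem hi, hfg, g.toFun_of_mem hj]

lemma A_subset_iUnion_of_c_ne_zero (hfg : f.toFun = g.toFun) {i : Fin f.n} (hc : f.c i ≠ 0) :
    f.A i ⊆ ⋃ j, g.A j := fun t ht =>
  g.mem_iUnion_of_toFun_ne_zero (by rwa [← hfg, f.toFun_of_mem ht])

lemma smulDDF_c_inter_A_eq (hfg : f.toFun = g.toFun) {τ : (ℝ → ℝ) → (ℝ → ℝ) → (ℝ → ℝ)}
    {γ : Set Ω → ℝ → ℝ} (hγ : IsDecomposable S τ γ) (E : Set Ω) (i : Fin f.n) (j : Fin g.n) :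
    smulDDF (f.c i) (γ (E ∩ f.A i ∩ g.A j)) = smulDDF (g.c j) (γ (E ∩ f.A i ∩ g.A j)) := by
  rcases (E ∩ f.A i ∩ g.A j).eq_empty_or_nonempty with h | ⟨t, ht⟩
  · rw [h, hγ.1, smulDDF_eps0 (f.hc i), smulDDF_eps0 (g.hc j)]
  · rw [c_eq_of_mem hfg ht.1.2 ht.2]

end SimpleFn

theorem stmt12_general {Ω : Type*} (S : Set (Set Ω)) (hS : MeasureTheory.IsSetRing S)
    (τ : (ℝ → ℝ) → (ℝ → ℝ) → (ℝ → ℝ)) (hτ : IsTriangleFn τ) (hd : IsDistributive τ)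
    (γ : Set Ω → (ℝ → ℝ)) (hγ : IsDecomposable S τ γ)
    (f g : SimpleFn S) (hfg : f.toFun = g.toFun) (E : Set Ω) (hE : E ∈ S) :
    f.integral τ γ E = g.integral τ γ E := by
  have : Std.Commutative τ := ⟨hτ.2.1⟩
  have : Std.Associative τ := ⟨hτ.2.2.1⟩
  have he := hτ.tau_eps0_eps0
  have refine_f (i : Fin f.n) := hγ.smulDDF_apply_eq_oplus_inter hS he hd (f.hc i)
    (hS.inter_mem hE (f.hA i)) g.hA g.hdisj
    fun hc => inter_subset_right.trans (SimpleFn.A_subset_iUnion_of_c_ne_zero hfg hc)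
  have refine_g (j : Fin g.n) := hγ.smulDDF_apply_eq_oplus_inter hS he hd (g.hc j)
    (hS.inter_mem hE (g.hA j)) f.hA f.hdisj
    fun hc => inter_subset_right.trans (SimpleFn.A_subset_iUnion_of_c_ne_zero hfg.symm hc)
  simp only [SimpleFn.integral, refine_f, refine_g, inter_right_comm E (g.A _),
    ← SimpleFn.smulDDF_c_inter_A_eq hfg hγ E]
  exact oplus_comm he _

/-- the γ-integral of a simple function does not depend on its
representation. -/
theorem stmt12 {Ω : Type*} (S : Set (Set Ω)) (hS : MeasureTheory.IsSetRing S)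
    (τ : (ℝ → ℝ) → (ℝ → ℝ) → (ℝ → ℝ)) (hτ : IsTriangleFn τ) (hd : IsDistributive τ)
    (γ : Set Ω → (ℝ → ℝ)) (hmem : ∀ E ∈ S, IsDDF (γ E)) (hγ : IsDecomposable S τ γ)
    (f g : SimpleFn S) (hfg : f.toFun = g.toFun) (E : Set Ω) (hE : E ∈ S) :
    f.integral τ γ E = g.integral τ γ E :=
  stmt12_general S hS τ hτ hd γ hγ f g hfg E hE

end
end
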